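/- The change-of-annotations translation π ↦ π^{s'} is weakly preserving: it preserves local height, sizes of cuts, freeness of cuts in the main local fragment, and locality of cuts. -/

import Mathlib

/-! Formulas of the modal language with ⊥, →, □ and the master modality ⊞. -/
inductive Fml : Type
  | var : ℕ → Fml
  | bot : Fml
  | imp : Fml → Fml → Fml
  | box : Fml → Fml
  | mbox : Fml → Fml

/-- The size of a formula (number of symbols). -/
def Fml.size : Fml → ℕ
  | .var _ => 1
  | .bot => 1
  | .imp a b => a.size + b.size + 1
  | .box a => a.size + 1
  | .mbox a => a.size + 1

/-- Annotations: either a formula in focus or the symbol ∘ (unfocused). -/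
inductive Ann : Type
  | o : Ann
  | fml : Fml → Ann

abbrev Msf := Multiset Fml

/-- Natural (Hessenberg) addition of ordinals, as formerly in Mathlib
(`Mathlib.SetTheory.Ordinal.NaturalOps`, since removed from Mathlib). -/
noncomputable def Ordinal.nadd.{u} : Ordinal.{u} → Ordinal.{u} → Ordinal.{u}
  | a, b =>
    max (⨆ x : Set.Iio a, Order.succ (Ordinal.nadd x.1 b))
      (⨆ x : Set.Iio b, Order.succ (Ordinal.nadd a x.1))
termination_by a b => (a, b)
decreasing_by
  · exact Prod.Lex.left _ _ x.2
  · exact Prod.Lex.right _ x.2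

/-- `Γ, ⊞Γ`. -/
def dne (P : Msf) : Msf := P + P.map Fml.mbox

/-- An annotated sequent `Γ ⇒_s Δ`. -/
structure Sequent where
  left : Msf
  ann : Ann
  right : Msf

/-- The condition for being an annotated sequent: if the annotation is a formula `φ`
then `⊞φ` occurs on the right. -/
def Sequent.ok (S : Sequent) : Prop :=
  ∀ φ : Fml, S.ann = Ann.fml φ → Fml.mbox φ ∈ S.right

/-- Rule tags: the rule applied at a node of a derivation tree, together with all the
data of the rule instance. -/
inductive Tag : Type
  | ax (Γ : Msf) (p : ℕ) (Δ : Msf) (s : Ann)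
  | axBot (Γ : Msf) (Δ : Msf) (s : Ann)
  | impL (Γ : Msf) (φ ψ : Fml) (Δ : Msf) (s : Ann)
  | impR (Γ : Msf) (φ ψ : Fml) (Δ : Msf) (s : Ann)
  | box (Sg Γ P Δ : Msf) (φ : Fml) (s : Ann)
  | mboxF (Sg Γ P Δ : Msf) (φ : Fml)
  | mboxU (Sg Γ P Δ : Msf) (φ : Fml) (s : Ann)
  | cut (Γ Δ : Msf) (χ : Fml) (s : Ann)

/-- Number of children (premises and witnesses) of each rule. -/
def Tag.arity : Tag → ℕ
  | .ax .. => 0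
  | .axBot .. => 0
  | .impL .. => 2
  | .impR .. => 1
  | .box .. => 1
  | .mboxF .. => 2
  | .mboxU .. => 2
  | .cut .. => 2

/-- Conclusion sequent of a rule instance. -/
def Tag.concl : Tag → Sequent
  | .ax Γ p Δ s => ⟨Fml.var p ::ₘ Γ, s, Fml.var p ::ₘ Δ⟩
  | .axBot Γ Δ s => ⟨Fml.bot ::ₘ Γ, s, Δ⟩
  | .impL Γ φ ψ Δ s => ⟨Fml.imp φ ψ ::ₘ Γ, s, Δ⟩
  | .impR Γ φ ψ Δ s => ⟨Γ, s, Fml.imp φ ψ ::ₘ Δ⟩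
  | .box Sg Γ P Δ φ s => ⟨Sg + Γ.map Fml.box + P.map Fml.mbox, s, Fml.box φ ::ₘ Δ⟩
  | .mboxF Sg Γ P Δ φ => ⟨Sg + Γ.map Fml.box + P.map Fml.mbox, Ann.fml φ, Fml.mbox φ ::ₘ Δ⟩
  | .mboxU Sg Γ P Δ φ s => ⟨Sg + Γ.map Fml.box + P.map Fml.mbox, s, Fml.mbox φ ::ₘ Δ⟩
  | .cut Γ Δ _ s => ⟨Γ, s, Δ⟩

/-- The `i`-th premise/witness sequent of a rule instance (junk value out of range). -/
def Tag.prem : Tag → ℕ → Sequent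
  | .impL Γ φ _ Δ s, 0 => ⟨Γ, s, φ ::ₘ Δ⟩
  | .impL Γ _ ψ Δ s, 1 => ⟨ψ ::ₘ Γ, s, Δ⟩
  | .impR Γ φ ψ Δ s, 0 => ⟨φ ::ₘ Γ, s, ψ ::ₘ Δ⟩
  | .box _ Γ P _ φ _, 0 => ⟨Γ + dne P, Ann.o, {φ}⟩
  | .mboxF _ Γ P _ φ, 0 => ⟨Γ + dne P, Ann.o, {φ}⟩
  | .mboxF _ Γ P _ φ, 1 => ⟨Γ + dne P, Ann.fml φ, {Fml.mbox φ}⟩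
  | .mboxU _ Γ P _ φ _, 0 => ⟨Γ + dne P, Ann.o, {φ}⟩
  | .mboxU _ Γ P _ φ _, 1 => ⟨Γ + dne P, Ann.fml φ, {Fml.mbox φ}⟩
  | .cut Γ Δ χ s, 0 => ⟨Γ, s, χ ::ₘ Δ⟩
  | .cut Γ Δ χ s, 1 => ⟨χ ::ₘ Γ, s, Δ⟩
  | _, _ => ⟨0, Ann.o, 0⟩

/-- Side conditions: `⊞_u` is applicable only when `s ≠ φ`
(`⊞_f` has `s = φ` built into its conclusion). -/
def Tag.sideOk : Tag → Prop
  | .mboxU _ _ _ _ φ s => s ≠ Ann.fml φ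
  | _ => True

/-- Which children are witnesses (proofs in a strictly lower-indexed system). -/
def Tag.witness : Tag → ℕ → Bool
  | .box .., 0 => true
  | .mboxF .., 0 => true
  | .mboxU .., 0 => true
  | .mboxU .., 1 => true
  | _, _ => false

/-- Progress occurs exactly at the right premise of `⊞_f`. -/
def Tag.progress : Tag → ℕ → Bool
  | .mboxF .., 1 => true
  | _, _ => false

/-- Whether a node is a cut. -/
def Tag.isCut : Tag → Prop
  | .cut .. => True
  | _ => False

/-- The cut formula of a cut node. -/
def Tag.cutFml : Tag → Option Fml
  | .cut _ _ χ _ => some χ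
  | _ => none

/-- A (possibly non-wellfounded) derivation tree: a partial labelling of addresses by
rule instances.  Witnesses (and witnesses of witnesses, and so on) are included as
subtrees hanging off witness edges. -/
structure PreProof : Type where
  label : List ℕ → Option Tag

namespace PreProof

def dom (π : PreProof) (a : List ℕ) : Prop := π.label a ≠ none

/-- Local well-formedness of a derivation tree. -/
structure Wf (π : PreProof) : Prop where
  root : π.dom []
  prefixClosed : ∀ a i, π.dom (a ++ [i]) → π.dom a
  arity : ∀ a t, π.label a = some t → ∀ i : ℕ, (π.dom (a ++ [i]) ↔ i < t.arity)
  coherent : ∀ a t i ti, π.label a = some t → π.label (a ++ [i]) = some ti →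
    ti.concl = t.prem i
  seqOk : ∀ a t, π.label a = some t → t.concl.ok
  side : ∀ a t, π.label a = some t → t.sideOk

/-- The address of the `n`-th node along the branch `f`. -/
def branchPrefix (f : ℕ → ℕ) (n : ℕ) : List ℕ := (List.range n).map f

/-- `f` is an infinite branch of `π`. -/
def IsBranch (π : PreProof) (f : ℕ → ℕ) : Prop := ∀ n, π.dom (branchPrefix f n)

/-- Every infinite branch crosses progress edges or witness edges infinitely often
(together with the ordinal labelling below, this says every infinite branch of each of
the stratified systems makes progress infinitely often). -/
def ProgressCond (π : PreProof) : Prop :=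
  ∀ f : ℕ → ℕ, π.IsBranch f → ∀ N : ℕ, ∃ n, N ≤ n ∧ ∃ t,
    π.label (branchPrefix f n) = some t ∧
    (t.progress (f n) = true ∨ t.witness (f n) = true)

/-- `π` carries an ordinal labelling witnessing that it is a proof of the system indexed
by `α`: witnesses live in systems of strictly smaller index. -/
def OrdOk (π : PreProof) (α : Ordinal.{0}) : Prop :=
  ∃ ord : List ℕ → Ordinal.{0}, ord [] = α ∧
    ∀ a t (i : ℕ), π.label a = some t → π.dom (a ++ [i]) →
      (t.witness i = true → ord (a ++ [i]) < ord a) ∧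
      (t.witness i = false → ord (a ++ [i]) = ord a)

/-- `π` is a proof in `α`-G∞ℓK⁺ + Cut. -/
def IsProofLe (π : PreProof) (α : Ordinal.{0}) : Prop :=
  π.Wf ∧ π.ProgressCond ∧ π.OrdOk α

/-- `π` is a proof in G∞ℓK⁺ + Cut. -/
def IsProof (π : PreProof) : Prop := π.Wf ∧ π.ProgressCond ∧ ∃ α, π.OrdOk α

/-- `‖π‖`: the least `α` such that `π` is a proof in the `α`-indexed system. -/
noncomputable def height (π : PreProof) : Ordinal.{0} := sInf {α : Ordinal.{0} | π.OrdOk α}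

/-- Cut-free (everywhere: in the main fragment, witnesses, witnesses of witnesses, …). -/
def CutFree (π : PreProof) : Prop := ∀ a t, π.label a = some t → ¬ t.isCut

/-- `π` proves the sequent `S`. -/
def Concl (π : PreProof) (S : Sequent) : Prop :=
  ∃ t, π.label [] = some t ∧ t.concl = S

/-- The subtree at address `a`. -/
def sub (π : PreProof) (a : List ℕ) : PreProof := ⟨fun b => π.label (a ++ b)⟩

/-- `a` belongs to the main global fragment: the path to `a` crosses no witness edges. -/
def inMainGlobal (π : PreProof) (a : List ℕ) : Prop :=
  π.dom a ∧ ∀ b i, (b ++ [i]) <+: a → ∀ t, π.label b = some t → t.witness i = false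

/-- `a` belongs to the main local fragment: the path to `a` crosses no witness edges
and no progress edges. -/
def inMainLocal (π : PreProof) (a : List ℕ) : Prop :=
  π.dom a ∧ ∀ b i, (b ++ [i]) <+: a → ∀ t, π.label b = some t →
    t.witness i = false ∧ t.progress i = false

/-- All cuts occur in the main global fragment (the shape of proofs with mCut:
witnesses are cut-free). -/
def MCutShape (π : PreProof) : Prop :=
  ∀ a t, π.label a = some t → t.isCut → π.inMainGlobal a

/-- No cuts occur in the main global fragment (the shape of proofs with wCut). -/
def WCutShape (π : PreProof) : Prop :=
  ∀ a t, π.label a = some t → t.isCut → ¬ π.inMainGlobal a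

/-- No cuts in the main local fragment. -/
def NoCutInMainLocal (π : PreProof) : Prop :=
  ∀ a t, π.label a = some t → t.isCut → ¬ π.inMainLocal a

/-- `π` has local cuts only: it is a proof in G∞ℓK⁺ + mCut all of whose cuts occur
in its main local fragment. -/
def LocalCutsOnly (π : PreProof) : Prop :=
  π.IsProof ∧ ∀ a t, π.label a = some t → t.isCut → π.inMainLocal a

/-- `τ` is a witness of `π`: a subtree hanging off a witness edge from the main
global fragment. -/
def IsWitnessOf (τ π : PreProof) : Prop :=
  ∃ a t i, π.inMainGlobal a ∧ π.label a = some t ∧ t.witness i = true ∧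
    τ = π.sub (a ++ [i])

/-- `|π|`: the local height, i.e. the height of the main local fragment. -/
noncomputable def localHeight (π : PreProof) : ℕ∞ :=
  ⨆ a ∈ {a : List ℕ | π.inMainLocal a}, (a.length : ℕ∞)

/-- All cuts of `π` (including those in witnesses, witnesses of witnesses, …) have
size smaller than `n`. -/
def CutSizesLt (π : PreProof) (n : ℕ) : Prop :=
  ∀ a t χ, π.label a = some t → t.cutFml = some χ → χ.size < n

/-- `(⊞χ, α)`-unblocked: all cuts have cut formula `χ` or `⊞χ`, and cuts with cut
formula `⊞χ` have height at most `α` and cut-free subproofs at their premises. -/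
def Unblocked (π : PreProof) (χ : Fml) (α : Ordinal.{0}) : Prop :=
  ∀ a t ψ, π.label a = some t → t.cutFml = some ψ →
    (ψ = χ ∨ ψ = Fml.mbox χ) ∧
    (ψ = Fml.mbox χ →
      Ordinal.nadd (π.sub (a ++ [0])).height (π.sub (a ++ [1])).height ≤ α ∧
      (π.sub (a ++ [0])).CutFree ∧ (π.sub (a ++ [1])).CutFree)

end PreProof

/-- `G∞ℓK⁺_s ⊢ Γ ⇒_s Δ` (cut-free provability). -/
def Provable (Γ : Msf) (s : Ann) (Δ : Msf) : Prop :=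
  ∃ π : PreProof, π.IsProof ∧ π.CutFree ∧ π.Concl ⟨Γ, s, Δ⟩

/-- `G∞ℓK⁺_s + Cut ⊢ Γ ⇒_s Δ`. -/
def ProvableC (Γ : Msf) (s : Ann) (Δ : Msf) : Prop :=
  ∃ π : PreProof, π.IsProof ∧ π.Concl ⟨Γ, s, Δ⟩

/-- Cut admissibility for the formula `χ`. -/
def CutAdm (χ : Fml) : Prop :=
  ∀ (s : Ann) (Γ Δ : Msf), Provable Γ s (χ ::ₘ Δ) → Provable (χ ::ₘ Γ) s Δ →
    Provable Γ s Δ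

/-- Cut admissibility for `χ` with cuts of height smaller than `α`. -/
def CutAdmBelow (χ : Fml) (α : Ordinal.{0}) : Prop :=
  ∀ (s : Ann) (Γ Δ : Msf) (π τ : PreProof),
    π.IsProof → π.CutFree → π.Concl ⟨Γ, s, χ ::ₘ Δ⟩ →
    τ.IsProof → τ.CutFree → τ.Concl ⟨χ ::ₘ Γ, s, Δ⟩ →
    Ordinal.nadd π.height τ.height < α →
    Provable Γ s Δ

/-! Preservation properties of functions on proofs. -/

def PreservesOrdHeight (f : PreProof → PreProof) : Prop :=
  ∀ π : PreProof, π.IsProof → (f π).height ≤ π.height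

def PreservesLocalHeight (f : PreProof → PreProof) : Prop :=
  ∀ π : PreProof, π.IsProof → (f π).localHeight ≤ π.localHeight

def PreservesCutSizes (f : PreProof → PreProof) : Prop :=
  ∀ (n : ℕ) (π : PreProof), π.IsProof → π.CutSizesLt n → (f π).CutSizesLt n

def PreservesMainLocalCutFree (f : PreProof → PreProof) : Prop :=
  ∀ π : PreProof, π.IsProof → π.NoCutInMainLocal → (f π).NoCutInMainLocal

def PreservesCutLocality (f : PreProof → PreProof) : Prop :=
  ∀ π : PreProof, π.LocalCutsOnly → (f π).LocalCutsOnly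

def PreservesWitnessCutLocality (f : PreProof → PreProof) : Prop :=
  ∀ π : PreProof, π.IsProof → (∀ τ : PreProof, τ.IsWitnessOf π → τ.LocalCutsOnly) →
    ∀ τ : PreProof, τ.IsWitnessOf (f π) → τ.LocalCutsOnly

def WeaklyPreserving (f : PreProof → PreProof) : Prop :=
  PreservesLocalHeight f ∧ PreservesCutSizes f ∧
    PreservesMainLocalCutFree f ∧ PreservesCutLocality f

def StronglyPreserving (f : PreProof → PreProof) : Prop :=
  WeaklyPreserving f ∧ PreservesOrdHeight f ∧ PreservesWitnessCutLocality f

/-! ### Auxiliary development for the change-of-annotations translation -/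

deriving instance DecidableEq for Fml
deriving instance DecidableEq for Ann

namespace CoA

open PreProof

attribute [local instance] Classical.propDecidable

/-- Relabel the annotation of a rule instance to `s'`, converting `⊞_f` into `⊞_u`
and vice versa as needed. -/
def retag (s' : Ann) : Tag → Tag
  | .ax Γ p Δ _ => .ax Γ p Δ s'
  | .axBot Γ Δ _ => .axBot Γ Δ s'
  | .impL Γ φ ψ Δ _ => .impL Γ φ ψ Δ s'
  | .impR Γ φ ψ Δ _ => .impR Γ φ ψ Δ s'
  | .box Sg Γ P Δ φ _ => .box Sg Γ P Δ φ s'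
  | .mboxF Sg Γ P Δ φ =>
      if s' = .fml φ then .mboxF Sg Γ P Δ φ else .mboxU Sg Γ P Δ φ s'
  | .mboxU Sg Γ P Δ φ _ =>
      if s' = .fml φ then .mboxF Sg Γ P Δ φ else .mboxU Sg Γ P Δ φ s'
  | .cut Γ Δ χ _ => .cut Γ Δ χ s'

lemma retag_arity (s' : Ann) (t : Tag) : (retag s' t).arity = t.arity := by
  cases t <;> simp only [retag] <;> (try split) <;> rfl

lemma retag_concl (s' : Ann) (t : Tag) :
    (retag s' t).concl = ⟨t.concl.left, s', t.concl.right⟩ := by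
  cases t <;> simp only [retag] <;> (try split) <;> simp_all [Tag.concl]

lemma retag_wp (s' : Ann) (t : Tag) (i : ℕ) :
    ((retag s' t).witness i = false ∧ (retag s' t).progress i = false) ↔
      (t.witness i = false ∧ t.progress i = false) := by
  rcases i with _ | _ | i <;> cases t <;>
    simp only [retag] <;> (try split) <;>
    simp [Tag.witness, Tag.progress]

lemma retag_pw (s' : Ann) (t : Tag) (i : ℕ) :
    ((retag s' t).progress i = true ∨ (retag s' t).witness i = true) ↔
      (t.progress i = true ∨ t.witness i = true) := by
  rcases i with _ | _ | i <;> cases t <;>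
    simp only [retag] <;> (try split) <;>
    simp [Tag.witness, Tag.progress]

lemma retag_cutFml (s' : Ann) (t : Tag) : (retag s' t).cutFml = t.cutFml := by
  cases t <;> simp only [retag] <;> (try split) <;> rfl

lemma retag_isCut (s' : Ann) {t : Tag} (h : (retag s' t).isCut) : t.isCut := by
  cases t <;> simp only [retag] at h <;> first
    | exact h
    | (split at h <;> simp_all [Tag.isCut])

lemma retag_sideOk (s' : Ann) (t : Tag) : (retag s' t).sideOk := by
  cases t <;> simp only [retag] <;> (try split) <;> simp_all [Tag.sideOk]

/-- On edges within the main local fragment, the premise of the retagged rule is the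
relabelled premise. -/
lemma retag_prem_local (s' : Ann) (t : Tag) (i : ℕ) (hw : t.witness i = false)
    (hp : t.progress i = false) (hi : i < t.arity) :
    (retag s' t).prem i = ⟨(t.prem i).left, s', (t.prem i).right⟩ := by
  cases t <;> rcases i with _ | _ | i <;>
    simp_all [retag, Tag.witness, Tag.progress, Tag.arity, Tag.prem] <;> omega

/-- On witness/progress edges the premise is unchanged by retagging. -/
lemma retag_prem_bd (s' : Ann) (t : Tag) (i : ℕ)
    (h : t.witness i = true ∨ t.progress i = true) :
    (retag s' t).prem i = t.prem i := by
  cases t <;> rcases i with _ | _ | i <;> simp_all [Tag.witness, Tag.progress] <;>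
    simp only [retag] <;> (try split) <;> rfl

/-- Membership of `⊞ψ` on the right is inherited by premises along local edges. -/
lemma mem_right_prem (t : Tag) (i : ℕ) (hw : t.witness i = false)
    (hp : t.progress i = false) (hi : i < t.arity) (ψ : Fml)
    (hm : Fml.mbox ψ ∈ t.concl.right) : Fml.mbox ψ ∈ (t.prem i).right := by
  cases t <;> rcases i with _ | _ | i <;>
    simp_all [Tag.witness, Tag.progress, Tag.arity, Tag.concl, Tag.prem] <;> omega

/-- The path to `a` crosses no witness and no progress edges. -/
def MLP (π : PreProof) (a : List ℕ) : Prop :=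
  ∀ b i, (b ++ [i]) <+: a → ∀ t, π.label b = some t →
    t.witness i = false ∧ t.progress i = false

lemma MLP_nil (π : PreProof) : MLP π [] := by
  intro b i h t _
  have := h.length_le
  simp at this

lemma MLP_mono {π : PreProof} {a a' : List ℕ} (h : a <+: a') (H : MLP π a') :
    MLP π a := fun b i hb t ht => H b i (hb.trans h) t ht

lemma snoc_eq_snoc {a b : List ℕ} {i j : ℕ} (h : a ++ [i] = b ++ [j]) :
    a = b ∧ i = j := by
  have := List.append_inj' h rfl
  simpa using this

lemma MLP_snoc {π : PreProof} {a : List ℕ} {i : ℕ} :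
    MLP π (a ++ [i]) ↔ MLP π a ∧ ∀ t, π.label a = some t →
      t.witness i = false ∧ t.progress i = false := by
  constructor
  · intro H
    exact ⟨MLP_mono (List.prefix_append a [i]) H,
      fun t ht => H a i (List.prefix_refl _) t ht⟩
  · rintro ⟨H1, H2⟩ b j hb t ht
    rcases List.prefix_concat_iff.mp hb with heq | hb'
    · obtain ⟨rfl, rfl⟩ := snoc_eq_snoc heq
      exact H2 t ht
    · exact H1 b j hb' t ht

lemma inMainLocal_iff {π : PreProof} {a : List ℕ} :
    π.inMainLocal a ↔ π.dom a ∧ MLP π a := Iff.rfl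

/-- The translation is applied only when the root sequent relabelled with `s'` is a
legitimate annotated sequent. -/
def gate (s' : Ann) (π : PreProof) : Prop :=
  ∃ t, π.label [] = some t ∧ Sequent.ok ⟨t.concl.left, s', t.concl.right⟩

/-- The change-of-annotations translation. -/
noncomputable def tr (s' : Ann) (π : PreProof) : PreProof :=
  ⟨fun a => if gate s' π ∧ MLP π a then (π.label a).map (retag s') else π.label a⟩

lemma tr_eq_of_not_gate {s' : Ann} {π : PreProof} (hg : ¬ gate s' π) :
    tr s' π = π := by
  cases π with
  | mk l =>
    simp only [tr, PreProof.mk.injEq]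
    funext a
    exact if_neg (fun h => hg h.1)

lemma tr_label_some {s' : Ann} {π : PreProof} {a : List ℕ} {t : Tag}
    (hc : gate s' π ∧ MLP π a) (ht : π.label a = some t) :
    (tr s' π).label a = some (retag s' t) := by
  show (if gate s' π ∧ MLP π a then (π.label a).map (retag s') else π.label a) = _
  rw [if_pos hc, ht]
  rfl

lemma tr_label_of_not {s' : Ann} {π : PreProof} {a : List ℕ}
    (hc : ¬ (gate s' π ∧ MLP π a)) : (tr s' π).label a = π.label a := if_neg hc

lemma dom_tr {s' : Ann} {π : PreProof} {a : List ℕ} :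
    (tr s' π).dom a ↔ π.dom a := by
  show (if gate s' π ∧ MLP π a then (π.label a).map (retag s') else π.label a) ≠ none
    ↔ _
  split
  · simp [PreProof.dom, Option.map_eq_none_iff]
  · rfl

lemma tr_label_inv {s' : Ann} {π : PreProof} {a : List ℕ} {t' : Tag}
    (h : (tr s' π).label a = some t') :
    ∃ t, π.label a = some t ∧
      ((gate s' π ∧ MLP π a) ∧ t' = retag s' t ∨
        ¬ (gate s' π ∧ MLP π a) ∧ t' = t) := by
  by_cases hc : gate s' π ∧ MLP π a
  · rw [show (tr s' π).label a
        = (π.label a).map (retag s') from if_pos hc] at h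
    obtain ⟨t, ht, h2⟩ := Option.map_eq_some_iff.mp h
    exact ⟨t, ht, Or.inl ⟨hc, h2.symm⟩⟩
  · rw [tr_label_of_not hc] at h
    exact ⟨t', h, Or.inr ⟨hc, rfl⟩⟩

lemma dom_of_label {π : PreProof} {a : List ℕ} {t : Tag}
    (h : π.label a = some t) : π.dom a := by
  simp [PreProof.dom, h]

lemma label_of_dom {π : PreProof} {a : List ℕ} (h : π.dom a) :
    ∃ t, π.label a = some t := Option.ne_none_iff_exists'.mp h

section WF

variable {s' : Ann} {π : PreProof}

lemma edge_true_of_not_MLP {a : List ℕ} {i : ℕ} {t : Tag} (hM : MLP π a)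
    (hM' : ¬ MLP π (a ++ [i])) (ht : π.label a = some t) :
    t.witness i = true ∨ t.progress i = true := by
  by_contra hcon
  push_neg at hcon
  rcases hcon with ⟨h1, h2⟩
  exact hM' (MLP_snoc.mpr ⟨hM, fun t0 ht0 => by
    rw [ht] at ht0; cases ht0
    exact ⟨Bool.eq_false_iff.mpr h1, Bool.eq_false_iff.mpr h2⟩⟩)

lemma ok_prop (hwf : π.Wf) (hg : gate s' π) :
    ∀ a : List ℕ, MLP π a → ∀ t, π.label a = some t →
      Sequent.ok ⟨t.concl.left, s', t.concl.right⟩ := by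
  intro a
  induction a using List.reverseRecOn with
  | nil =>
    intro _ t ht
    obtain ⟨t0, ht0, hok⟩ := hg
    rw [ht0] at ht
    cases ht
    exact hok
  | append_singleton a i ih =>
    intro hm t ht
    obtain ⟨hma, _⟩ := MLP_snoc.mp hm
    have hdom : π.dom (a ++ [i]) := dom_of_label ht
    have hda : π.dom a := hwf.prefixClosed a i hdom
    obtain ⟨tp, htp⟩ := label_of_dom hda
    have hedge := (MLP_snoc.mp hm).2 tp htp
    have hconcl : t.concl = tp.prem i := hwf.coherent a tp i t htp ht
    have hi : i < tp.arity := (hwf.arity a tp htp i).1 hdom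
    have hok := ih hma tp htp
    intro ψ hψ
    have h1 : Fml.mbox ψ ∈ tp.concl.right := hok ψ hψ
    have h2 := mem_right_prem tp i hedge.1 hedge.2 hi ψ h1
    show Fml.mbox ψ ∈ t.concl.right
    rw [hconcl]
    exact h2

lemma tr_wf (hwf : π.Wf) : (tr s' π).Wf := by
  by_cases hg : gate s' π
  swap
  · rw [tr_eq_of_not_gate hg]; exact hwf
  constructor
  · exact dom_tr.mpr hwf.root
  · intro a i h
    exact dom_tr.mpr (hwf.prefixClosed a i (dom_tr.mp h))
  · intro a t' ht' i
    obtain ⟨t, ht, hc⟩ := tr_label_inv ht'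
    rw [dom_tr]
    rcases hc with ⟨_, rfl⟩ | ⟨_, rfl⟩
    · rw [retag_arity]; exact hwf.arity a t ht i
    · exact hwf.arity a t' ht i
  · -- coherent
    intro a t' i ti' ht' hti'
    obtain ⟨t, ht, hc⟩ := tr_label_inv ht'
    obtain ⟨ti, hti, hci⟩ := tr_label_inv hti'
    have hco : ti.concl = t.prem i := hwf.coherent a t i ti ht hti
    have hdomi : π.dom (a ++ [i]) := dom_of_label hti
    have hi : i < t.arity := (hwf.arity a t ht i).1 hdomi
    rcases hc with ⟨⟨_, hma⟩, rfl⟩ | ⟨hnc, rfl⟩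
    · rcases hci with ⟨⟨_, hmi⟩, rfl⟩ | ⟨hnci, rfl⟩
      · have hedge := (MLP_snoc.mp hmi).2 t ht
        rw [retag_concl, retag_prem_local s' t i hedge.1 hedge.2 hi, hco]
      · have hwp : t.witness i = true ∨ t.progress i = true := by
          refine edge_true_of_not_MLP hma (fun hMi => hnci ⟨hg, hMi⟩) ht
        rw [retag_prem_bd s' t i hwp, hco]
    · rcases hci with ⟨⟨_, hmi⟩, rfl⟩ | ⟨_, rfl⟩
      · exact absurd ⟨hg, MLP_mono (List.prefix_append a [i]) hmi⟩ hnc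
      · exact hco
  · -- seqOk
    intro a t' ht'
    obtain ⟨t, ht, hc⟩ := tr_label_inv ht'
    rcases hc with ⟨⟨_, hma⟩, rfl⟩ | ⟨_, rfl⟩
    · rw [retag_concl]
      exact ok_prop hwf hg a hma t ht
    · exact hwf.seqOk a t' ht
  · -- side
    intro a t' ht'
    obtain ⟨t, ht, hc⟩ := tr_label_inv ht'
    rcases hc with ⟨_, rfl⟩ | ⟨_, rfl⟩
    · exact retag_sideOk s' t
    · exact hwf.side a t' ht

lemma tr_prog (hp : π.ProgressCond) : (tr s' π).ProgressCond := by
  by_cases hg : gate s' π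
  swap
  · rw [tr_eq_of_not_gate hg]; exact hp
  intro f hf N
  have hf' : π.IsBranch f := fun n => dom_tr.mp (hf n)
  obtain ⟨n, hn, t, ht, hor⟩ := hp f hf' N
  refine ⟨n, hn, ?_⟩
  by_cases hc : gate s' π ∧ MLP π (PreProof.branchPrefix f n)
  · exact ⟨retag s' t, tr_label_some hc ht, (retag_pw s' t (f n)).mpr hor⟩
  · exact ⟨t, by rw [tr_label_of_not hc]; exact ht, hor⟩

end WF
section ORD

variable {s' : Ann} {π : PreProof}

/-- `a` carries a `⊞_f` instance that gets converted into `⊞_u`. -/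
def convF (s' : Ann) (π : PreProof) (a : List ℕ) : Prop :=
  MLP π a ∧ ∃ Sg Γ P Δ φ, π.label a = some (.mboxF Sg Γ P Δ φ) ∧ s' ≠ .fml φ

/-- `a` carries a `⊞_u` instance that gets converted into `⊞_f`. -/
def convU (s' : Ann) (π : PreProof) (a : List ℕ) : Prop :=
  MLP π a ∧ ∃ Sg Γ P Δ φ s, π.label a = some (.mboxU Sg Γ P Δ φ s) ∧ s' = .fml φ

def conv (s' : Ann) (π : PreProof) (a : List ℕ) : Prop :=
  convF s' π a ∨ convU s' π a

lemma conv_MLP {a : List ℕ} (h : conv s' π a) : MLP π a :=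
  h.elim And.left And.left

lemma not_convF_of_convU {a : List ℕ} (h : convU s' π a) : ¬ convF s' π a := by
  rintro ⟨_, Sg, Γ, P, Δ, φ, hl, _⟩
  obtain ⟨_, Sg', Γ', P', Δ', φ', s, hl', _⟩ := h
  rw [hl] at hl'
  cases hl'

lemma conv_edge {a : List ℕ} (h : conv s' π a) {t : Tag}
    (ht : π.label a = some t) : t.witness 1 = true ∨ t.progress 1 = true := by
  rcases h with ⟨_, Sg, Γ, P, Δ, φ, hl, _⟩ | ⟨_, Sg, Γ, P, Δ, φ, s, hl, _⟩ <;>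
    rw [hl] at ht <;> cases ht <;> simp [Tag.witness, Tag.progress]

lemma not_MLP_of_conv {a b : List ℕ} (hc : conv s' π a)
    (hp : (a ++ [1]) <+: b) : ¬ MLP π b := by
  intro hm
  have hl : ∃ t, π.label a = some t := by
    rcases hc with ⟨_, Sg, Γ, P, Δ, φ, hl, _⟩ | ⟨_, Sg, Γ, P, Δ, φ, s, hl, _⟩ <;>
      exact ⟨_, hl⟩
  obtain ⟨t, hl⟩ := hl
  have h1 := hm a 1 hp t hl
  have h2 := conv_edge hc hl
  rcases h2 with h2 | h2 <;> simp [h2] at h1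

lemma conv_unique {a a' b : List ℕ} (h : conv s' π a) (h' : conv s' π a')
    (hp : (a ++ [1]) <+: b) (hp' : (a' ++ [1]) <+: b) : a = a' := by
  by_contra hne
  rcases Nat.lt_trichotomy a.length a'.length with hl | hl | hl
  · have h1 : (a ++ [1]) <+: (a' ++ [1]) :=
      List.prefix_of_prefix_length_le hp hp' (by simp; omega)
    have h2 : (a ++ [1]) <+: a' :=
      List.prefix_of_prefix_length_le h1 (List.prefix_append a' [1]) (by simp; omega)
    exact not_MLP_of_conv h h2 (conv_MLP h')
  · have h1 : (a ++ [1]) = (a' ++ [1]) := by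
      refine (List.prefix_of_prefix_length_le hp hp' (by simp [hl])).eq_of_length ?_
      simp [hl]
    exact hne (snoc_eq_snoc h1).1
  · have h1 : (a' ++ [1]) <+: (a ++ [1]) :=
      List.prefix_of_prefix_length_le hp' hp (by simp; omega)
    have h2 : (a' ++ [1]) <+: a :=
      List.prefix_of_prefix_length_le h1 (List.prefix_append a [1]) (by simp; omega)
    exact not_MLP_of_conv h' h2 (conv_MLP h)

/-- The ordinal relabelling used to show `OrdOk` of the translated proof. -/
noncomputable def ordT (s' : Ann) (π : PreProof) (ord : List ℕ → Ordinal.{0})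
    (α : Ordinal.{0}) (b : List ℕ) : Ordinal.{0} :=
  if ∃ a, convU s' π a ∧ (a ++ [1]) <+: b ∧ ord b = ord (a ++ [1]) then α + 1
  else if ∃ a, convF s' π a ∧ (a ++ [1]) <+: b then ord b
  else ord b + 1

variable {ord : List ℕ → Ordinal.{0}} {α : Ordinal.{0}}

lemma ordT_nil (h0 : ord [] = α) : ordT s' π ord α [] = α + 1 := by
  unfold ordT
  rw [if_neg, if_neg, h0]
  · rintro ⟨a, _, hp⟩
    have := hp.length_le
    simp at this
  · rintro ⟨a, _, hp, _⟩
    have := hp.length_le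
    simp at this

lemma ordT_of_not_under {b : List ℕ}
    (h : ∀ a, conv s' π a → ¬ (a ++ [1]) <+: b) : ordT s' π ord α b = ord b + 1 := by
  unfold ordT
  rw [if_neg, if_neg]
  · rintro ⟨a, ha, hp⟩
    exact h a (Or.inl ha) hp
  · rintro ⟨a, ha, hp, _⟩
    exact h a (Or.inr ha) hp

lemma ordT_of_ML {b : List ℕ} (hm : MLP π b) : ordT s' π ord α b = ord b + 1 :=
  ordT_of_not_under (fun a hc hp => absurd hm (not_MLP_of_conv hc hp))

lemma ordT_of_F {a b : List ℕ} (ha : convF s' π a) (hp : (a ++ [1]) <+: b) :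
    ordT s' π ord α b = ord b := by
  unfold ordT
  rw [if_neg, if_pos ⟨a, ha, hp⟩]
  rintro ⟨a', ha', hp', _⟩
  have : a = a' := conv_unique (Or.inl ha) (Or.inr ha') hp hp'
  subst this
  exact not_convF_of_convU ha' ha

lemma ordT_of_U {a b : List ℕ} (ha : convU s' π a) (hp : (a ++ [1]) <+: b)
    (he : ord b = ord (a ++ [1])) : ordT s' π ord α b = α + 1 := by
  unfold ordT
  rw [if_pos ⟨a, ha, hp, he⟩]

lemma ordT_of_U_ne {a b : List ℕ} (ha : convU s' π a) (hp : (a ++ [1]) <+: b)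
    (he : ord b ≠ ord (a ++ [1])) : ordT s' π ord α b = ord b + 1 := by
  unfold ordT
  rw [if_neg, if_neg]
  · rintro ⟨a', ha', hp'⟩
    have : a = a' := conv_unique (Or.inr ha) (Or.inl ha') hp hp'
    subst this
    exact not_convF_of_convU ha ha'
  · rintro ⟨a', ha', hp', he'⟩
    have : a = a' := conv_unique (Or.inr ha) (Or.inr ha') hp hp'
    subst this
    exact he he'

lemma succ_lt_succ' {γ δ : Ordinal.{0}} (h : γ < δ) : γ + 1 < δ + 1 := by
  rw [Ordinal.add_one_eq_succ, Ordinal.add_one_eq_succ]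
  exact Order.succ_lt_succ h

lemma lt_succ_self' (γ : Ordinal.{0}) : γ < γ + 1 := by
  rw [Ordinal.add_one_eq_succ]
  exact Order.lt_succ γ

lemma tr_ord (hg : gate s' π) (hwf : π.Wf) (ho : π.OrdOk α) :
    (tr s' π).OrdOk (α + 1) := by
  obtain ⟨ord, h0, hstep⟩ := ho
  -- basic facts about ord
  have F0 : ∀ c, π.dom c → ∀ b, b <+: c → π.dom b := by
    intro c
    induction c using List.reverseRecOn with
    | nil =>
      intro h b hb
      rw [List.prefix_nil.mp hb]
      exact h
    | append_singleton c i ih =>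
      intro h b hb
      rcases List.prefix_concat_iff.mp hb with rfl | hb'
      · exact h
      · exact ih (hwf.prefixClosed c i h) b hb'
  have Fstep : ∀ b i, π.dom (b ++ [i]) → ord (b ++ [i]) ≤ ord b := by
    intro b i h
    obtain ⟨t, ht⟩ := label_of_dom (hwf.prefixClosed b i h)
    have hh := hstep b t i ht h
    cases hw : t.witness i
    · exact (hh.2 hw).le
    · exact (hh.1 hw).le
  have F3 : ∀ c, π.dom c → ∀ b, b <+: c → ord c ≤ ord b := by
    intro c
    induction c using List.reverseRecOn with
    | nil =>
      intro h b hb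
      rw [List.prefix_nil.mp hb]
    | append_singleton c i ih =>
      intro h b hb
      rcases List.prefix_concat_iff.mp hb with rfl | hb'
      · exact le_refl _
      · exact (Fstep c i h).trans (ih (hwf.prefixClosed c i h) b hb')
  have F2 : ∀ a, π.dom a → MLP π a → ord a = α := by
    intro a
    induction a using List.reverseRecOn with
    | nil => intro _ _; exact h0
    | append_singleton a i ih =>
      intro h hm
      obtain ⟨hma, _⟩ := MLP_snoc.mp hm
      have hda : π.dom a := hwf.prefixClosed a i h
      obtain ⟨t, ht⟩ := label_of_dom hda
      have hedge := (MLP_snoc.mp hm).2 t ht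
      rw [(hstep a t i ht h).2 hedge.1]
      exact ih hda hma
  have F4 : ∀ a, convF s' π a → π.dom (a ++ [1]) → ord (a ++ [1]) = α := by
    rintro a ⟨hm, Sg, Γ, P, Δ, φ, hl, _⟩ hd
    have hda : π.dom a := hwf.prefixClosed a 1 hd
    have hwit : (Tag.mboxF Sg Γ P Δ φ).witness 1 = false := rfl
    rw [(hstep a _ 1 hl hd).2 hwit]
    exact F2 a hda hm
  have F5 : ∀ a, convU s' π a → π.dom (a ++ [1]) → ord (a ++ [1]) < α := by
    rintro a ⟨hm, Sg, Γ, P, Δ, φ, s, hl, _⟩ hd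
    have hda : π.dom a := hwf.prefixClosed a 1 hd
    have hwit : (Tag.mboxU Sg Γ P Δ φ s).witness 1 = true := rfl
    have := (hstep a _ 1 hl hd).1 hwit
    rwa [F2 a hda hm] at this
  refine ⟨ordT s' π ord α, ordT_nil h0, ?_⟩
  intro b t' i ht' hd'
  have hd : π.dom (b ++ [i]) := dom_tr.mp hd'
  obtain ⟨t, ht, hcase⟩ := tr_label_inv ht'
  have hdb : π.dom b := dom_of_label ht
  have old := hstep b t i ht hd
  -- a conv node strictly above b++[i] is either above b or is b itself with i = 1
  have hchild : ∀ a, conv s' π a → (a ++ [1]) <+: (b ++ [i]) →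
      (a ++ [1]) <+: b ∨ (a = b ∧ i = 1) := by
    intro a hc hp
    rcases List.prefix_concat_iff.mp hp with heq | hp'
    · obtain ⟨rfl, rfl⟩ := snoc_eq_snoc heq
      exact Or.inr ⟨rfl, rfl⟩
    · exact Or.inl hp'
  by_cases hMb : MLP π b
  · -- b is in the main local fragment
    have hordb : ordT s' π ord α b = α + 1 := by
      rw [ordT_of_ML hMb, F2 b hdb hMb]
    have ht'eq : t' = retag s' t := by
      rcases hcase with ⟨_, h⟩ | ⟨hn, _⟩
      · exact h
      · exact absurd ⟨hg, hMb⟩ hn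
    subst ht'eq
    by_cases hMc : MLP π (b ++ [i])
    · -- the edge stays in the main local fragment
      have hedge := (MLP_snoc.mp hMc).2 t ht
      have hnew := (retag_wp s' t i).mpr hedge
      constructor
      · intro hw
        rw [hnew.1] at hw
        cases hw
      · intro _
        rw [ordT_of_ML hMc, ordT_of_ML hMb, old.2 hedge.1]
    · -- boundary edge
      have hwp : t.witness i = true ∨ t.progress i = true :=
        edge_true_of_not_MLP hMb hMc ht
      have hnotunder : ¬ (conv s' π b ∧ i = 1) → ∀ a, conv s' π a →
          ¬ (a ++ [1]) <+: (b ++ [i]) := by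
        intro hnc a hc hp
        rcases hchild a hc hp with hp' | ⟨rfl, rfl⟩
        · exact not_MLP_of_conv hc hp' hMb
        · exact hnc ⟨hc, rfl⟩
      by_cases hU : convU s' π b
      · -- ⊞_u converted to ⊞_f
        obtain ⟨_, Sg, Γ, P, Δ, φ, s, hl, hs⟩ := hU
        rw [ht] at hl
        injection hl with hl
        subst hl
        have hretag : retag s' (Tag.mboxU Sg Γ P Δ φ s) = Tag.mboxF Sg Γ P Δ φ := by
          simp [retag, hs]
        rw [hretag]
        have hUb : convU s' π b := ⟨hMb, Sg, Γ, P, Δ, φ, s, ht, hs⟩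
        rcases i with _ | _ | i
        · -- left witness
          have hwit0 : (Tag.mboxF Sg Γ P Δ φ).witness 0 = true := rfl
          have hwold : (Tag.mboxU Sg Γ P Δ φ s).witness 0 = true := rfl
          have hnu : ∀ a, conv s' π a → ¬ (a ++ [1]) <+: (b ++ [0]) := by
            apply hnotunder
            rintro ⟨_, h⟩
            cases h
          constructor
          · intro _
            rw [ordT_of_not_under hnu, hordb]
            exact succ_lt_succ' (lt_of_lt_of_eq (old.1 hwold) (F2 b hdb hMb))
          · intro hw
            rw [hwit0] at hw
            cases hw
        · -- converted edge: now a subproof edge, requires equality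
          have hwit1 : (Tag.mboxF Sg Γ P Δ φ).witness 1 = false := rfl
          constructor
          · intro hw
            rw [hwit1] at hw
            cases hw
          · intro _
            rw [ordT_of_U hUb (List.prefix_refl _) rfl, hordb]
        · -- out of range
          have : (Tag.mboxU Sg Γ P Δ φ s).witness (i+2) = false := rfl
          have h2 : (Tag.mboxU Sg Γ P Δ φ s).progress (i+2) = false := rfl
          rcases hwp with hwp | hwp
          · rw [this] at hwp; cases hwp
          · rw [h2] at hwp; cases hwp
      · by_cases hF : convF s' π b
        · -- ⊞_f converted to ⊞_u
          obtain ⟨_, Sg, Γ, P, Δ, φ, hl, hs⟩ := hF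
          rw [ht] at hl
          injection hl with hl
          subst hl
          have hretag : retag s' (Tag.mboxF Sg Γ P Δ φ)
              = Tag.mboxU Sg Γ P Δ φ s' := by
            simp [retag, hs]
          rw [hretag]
          have hFb : convF s' π b := ⟨hMb, Sg, Γ, P, Δ, φ, ht, hs⟩
          rcases i with _ | _ | i
          · have hwit0 : (Tag.mboxU Sg Γ P Δ φ s').witness 0 = true := rfl
            have hwold : (Tag.mboxF Sg Γ P Δ φ).witness 0 = true := rfl
            have hnu : ∀ a, conv s' π a → ¬ (a ++ [1]) <+: (b ++ [0]) := by
              apply hnotunder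
              rintro ⟨_, h⟩
              cases h
            constructor
            · intro _
              rw [ordT_of_not_under hnu, hordb]
              exact succ_lt_succ' (lt_of_lt_of_eq (old.1 hwold) (F2 b hdb hMb))
            · intro hw
              rw [hwit0] at hw
              cases hw
          · -- converted edge: now a witness edge, requires strict decrease
            have hwit1 : (Tag.mboxU Sg Γ P Δ φ s').witness 1 = true := rfl
            have hwold : (Tag.mboxF Sg Γ P Δ φ).witness 1 = false := rfl
            constructor
            · intro _
              rw [ordT_of_F hFb (List.prefix_refl _), old.2 hwold, F2 b hdb hMb, hordb]
              exact lt_succ_self' α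
            · intro hw
              rw [hwit1] at hw
              cases hw
          · have h1 : (Tag.mboxF Sg Γ P Δ φ).witness (i+2) = false := rfl
            have h2 : (Tag.mboxF Sg Γ P Δ φ).progress (i+2) = false := rfl
            rcases hwp with hwp | hwp
            · rw [h1] at hwp; cases hwp
            · rw [h2] at hwp; cases hwp
        · -- no conversion at b
          have hnc : ¬ conv s' π b := fun h => h.elim hF hU
          have hnu : ∀ a, conv s' π a → ¬ (a ++ [1]) <+: (b ++ [i]) :=
            hnotunder (fun h => hnc h.1)
          have hwit_eq : (retag s' t).witness i = t.witness i := by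
            clear old hwp ht' hcase hd' hd hnu hMc
            rcases i with _ | _ | i <;> cases t <;>
              simp only [retag] <;> (try split) <;> (try rfl)
            · rename_i h
              exact absurd ⟨hMb, _, _, _, _, _, ht, h⟩ hF
            · rename_i h
              exact absurd ⟨hMb, _, _, _, _, _, _, ht, h⟩ hU
          rw [ordT_of_not_under hnu, hordb]
          constructor
          · intro hw
            rw [hwit_eq] at hw
            exact succ_lt_succ' (lt_of_lt_of_eq (old.1 hw) (F2 b hdb hMb))
          · intro hw
            rw [hwit_eq] at hw
            rw [old.2 hw, F2 b hdb hMb]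
  · -- b is not in the main local fragment: the tag is unchanged
    have ht'eq : t' = t := by
      rcases hcase with ⟨⟨_, hm⟩, _⟩ | ⟨_, h⟩
      · exact absurd hm hMb
      · exact h
    subst ht'eq
    by_cases hPU : ∃ a, convU s' π a ∧ (a ++ [1]) <+: b
    · obtain ⟨a, ha, hp⟩ := hPU
      have hpc : (a ++ [1]) <+: (b ++ [i]) := hp.trans (List.prefix_append b [i])
      have hdsub : π.dom (a ++ [1]) := F0 b hdb _ hp
      have hβα : ord (a ++ [1]) < α := F5 a ha hdsub
      have hble : ord b ≤ ord (a ++ [1]) := F3 b hdb _ hp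
      have hcle : ord (b ++ [i]) ≤ ord b := Fstep b i hd
      by_cases heqb : ord b = ord (a ++ [1])
      · have hordb : ordT s' π ord α b = α + 1 := ordT_of_U ha hp heqb
        constructor
        · intro hw
          have hlt : ord (b ++ [i]) < ord (a ++ [1]) :=
            lt_of_lt_of_le (old.1 hw) (heqb.le)
          rw [ordT_of_U_ne ha hpc (ne_of_lt hlt), hordb]
          exact succ_lt_succ' (hlt.trans hβα)
        · intro hw
          rw [ordT_of_U ha hpc ((old.2 hw).trans heqb), hordb]
      · have hordb : ordT s' π ord α b = ord b + 1 := ordT_of_U_ne ha hp heqb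
        constructor
        · intro hw
          have hne : ord (b ++ [i]) ≠ ord (a ++ [1]) :=
            ne_of_lt (lt_of_lt_of_le (old.1 hw) hble)
          rw [ordT_of_U_ne ha hpc hne, hordb]
          exact succ_lt_succ' (old.1 hw)
        · intro hw
          have hne : ord (b ++ [i]) ≠ ord (a ++ [1]) := by
            rw [old.2 hw]; exact heqb
          rw [ordT_of_U_ne ha hpc hne, hordb, old.2 hw]
    · by_cases hPF : ∃ a, convF s' π a ∧ (a ++ [1]) <+: b
      · obtain ⟨a, ha, hp⟩ := hPF
        have hpc : (a ++ [1]) <+: (b ++ [i]) := hp.trans (List.prefix_append b [i])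
        rw [ordT_of_F ha hp, ordT_of_F ha hpc]
        exact ⟨old.1, old.2⟩
      · have hnub : ∀ a, conv s' π a → ¬ (a ++ [1]) <+: b := by
          intro a hc hp
          rcases hc with hc | hc
          · exact hPF ⟨a, hc, hp⟩
          · exact hPU ⟨a, hc, hp⟩
        have hnuc : ∀ a, conv s' π a → ¬ (a ++ [1]) <+: (b ++ [i]) := by
          intro a hc hp
          rcases hchild a hc hp with hp' | ⟨rfl, rfl⟩
          · exact hnub a hc hp'
          · exact hMb (conv_MLP hc)
        rw [ordT_of_not_under hnub, ordT_of_not_under hnuc]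
        constructor
        · intro hw
          exact succ_lt_succ' (old.1 hw)
        · intro hw
          rw [old.2 hw]

end ORD
section FINAL

variable {s' : Ann} {π : PreProof}

lemma tr_isProof (h : π.IsProof) : (tr s' π).IsProof := by
  by_cases hg : gate s' π
  · obtain ⟨hwf, hp, α, ho⟩ := h
    exact ⟨tr_wf hwf, tr_prog hp, α + 1, tr_ord hg hwf ho⟩
  · rw [tr_eq_of_not_gate hg]
    exact h

lemma MLP_tr_iff (a : List ℕ) : MLP (tr s' π) a ↔ MLP π a := by
  by_cases hg : gate s' π
  swap
  · rw [tr_eq_of_not_gate hg]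
  induction a using List.reverseRecOn with
  | nil => simp [MLP_nil]
  | append_singleton a i ih =>
    rw [MLP_snoc, MLP_snoc, ih]
    refine and_congr_right fun h1 => ?_
    constructor
    · intro h2 t ht
      exact (retag_wp s' t i).mp (h2 _ (tr_label_some ⟨hg, h1⟩ ht))
    · intro h2 t' ht'
      obtain ⟨t, ht, hc⟩ := tr_label_inv ht'
      rcases hc with ⟨_, rfl⟩ | ⟨hn, rfl⟩
      · exact (retag_wp s' t i).mpr (h2 t ht)
      · exact absurd ⟨hg, h1⟩ hn

lemma inML_tr_iff (a : List ℕ) : (tr s' π).inMainLocal a ↔ π.inMainLocal a :=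
  and_congr dom_tr (MLP_tr_iff a)

lemma tr_localHeight : (tr s' π).localHeight ≤ π.localHeight := by
  refine iSup₂_le fun a ha => ?_
  exact le_iSup₂ (f := fun (a : List ℕ) (_ : a ∈ {a | π.inMainLocal a}) =>
    (a.length : ℕ∞)) a ((inML_tr_iff a).mp ha)

lemma tr_cutSizes {n : ℕ} (h : π.CutSizesLt n) : (tr s' π).CutSizesLt n := by
  intro a t' χ ht' hχ
  obtain ⟨t, ht, hc⟩ := tr_label_inv ht'
  rcases hc with ⟨_, rfl⟩ | ⟨_, rfl⟩
  · exact h a t χ ht ((retag_cutFml s' t) ▸ hχ)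
  · exact h a t' χ ht hχ

lemma tr_isCut_inv {a : List ℕ} {t' : Tag} (ht' : (tr s' π).label a = some t')
    (hcut : t'.isCut) : ∃ t, π.label a = some t ∧ t.isCut := by
  obtain ⟨t, ht, hc⟩ := tr_label_inv ht'
  rcases hc with ⟨_, rfl⟩ | ⟨_, rfl⟩
  · exact ⟨t, ht, retag_isCut s' hcut⟩
  · exact ⟨t', ht, hcut⟩

lemma tr_noCutML (h : π.NoCutInMainLocal) : (tr s' π).NoCutInMainLocal := by
  intro a t' ht' hcut hin
  obtain ⟨t, ht, hc⟩ := tr_isCut_inv ht' hcut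
  exact h a t ht hc ((inML_tr_iff a).mp hin)

lemma tr_localCuts (h : π.LocalCutsOnly) : (tr s' π).LocalCutsOnly := by
  refine ⟨tr_isProof h.1, fun a t' ht' hcut => ?_⟩
  obtain ⟨t, ht, hc⟩ := tr_isCut_inv ht' hcut
  exact (inML_tr_iff a).mpr (h.2 a t ht hc)

end FINAL

end CoA

/-- The change-of-annotations translation `π ↦ π^{s'}` is **weakly preserving**:
there is a function performing the change of annotation to `s'` which preserves local
height, sizes of cuts, freeness of cuts in the main local fragment, and locality of
cuts. -/
theorem change_of_annotations_weakly_preserving (s' : Ann) :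
    ∃ f : PreProof → PreProof,
      (∀ (Γ Δ : Msf) (s : Ann) (π : PreProof), π.IsProof → π.Concl ⟨Γ, s, Δ⟩ →
        Sequent.ok ⟨Γ, s', Δ⟩ → (f π).IsProof ∧ (f π).Concl ⟨Γ, s', Δ⟩) ∧
      WeaklyPreserving f := by
  refine ⟨CoA.tr s', ?_, ?_, ?_, ?_, ?_⟩
  · intro Γ Δ s π hproof hconcl hok
    obtain ⟨t, ht, hceq⟩ := hconcl
    have hg : CoA.gate s' π := ⟨t, ht, by rw [hceq]; exact hok⟩
    refine ⟨CoA.tr_isProof hproof, CoA.retag s' t,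
      CoA.tr_label_some ⟨hg, CoA.MLP_nil π⟩ ht, ?_⟩
    rw [CoA.retag_concl, hceq]
  · intro π _
    exact CoA.tr_localHeight
  · intro n π _ h
    exact CoA.tr_cutSizes h
  · intro π _ h
    exact CoA.tr_noCutML h
  · intro π h
    exact CoA.tr_localCuts h
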